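/- arXiv:2303.15871 — 2 statements merged into one kernel-verified Lean document; each statement's English description precedes it below -/
import Mathlib

section
/- Let p, v ∈ ℝ³ with ‖p‖ > r > 0 and v ≠ 0. If h(p,v) := ⟪p, v⟫ + ‖v‖·√(‖p‖² − r²) ≥ 0, then for every t ≥ 0, ‖p + t·v‖² ≥ r². That is, the straight-line relative trajectory p(t) = p + t·v never enters the ball of radius r. -/
open scoped InnerProductSpace

theorem stmt4 (p v : EuclideanSpace ℝ (Fin 3)) (r : ℝ) (hr : 0 < r)
    (hpr : ‖p‖ > r) (hv : v ≠ 0)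
    (h : 0 ≤ ⟪p, v⟫_ℝ + ‖v‖ * Real.sqrt (‖p‖ ^ 2 - r ^ 2)) :
    ∀ t : ℝ, 0 ≤ t → ‖p + t • v‖ ^ 2 ≥ r ^ 2 := by
  intro t ht
  set s := Real.sqrt (‖p‖ ^ 2 - r ^ 2) with hs
  have hnn : (0:ℝ) ≤ ‖p‖ ^ 2 - r ^ 2 := by nlinarith [norm_nonneg p]
  have hs2 : s ^ 2 = ‖p‖ ^ 2 - r ^ 2 := Real.sq_sqrt hnn
  have hs0 : 0 ≤ s := Real.sqrt_nonneg _
  have key : ‖p + t • v‖ ^ 2 = ‖p‖ ^ 2 + 2 * t * ⟪p, v⟫_ℝ + t ^ 2 * ‖v‖ ^ 2 := by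
    rw [norm_add_sq_real, real_inner_smul_right, norm_smul]
    rw [Real.norm_eq_abs, mul_pow, sq_abs]
    ring
  rw [key]
  nlinarith [sq_nonneg (s - t * ‖v‖), mul_nonneg ht h]
end

section
/- Let p, v ∈ ℝ³ with ‖p‖ > r > 0 and suppose v is tangent to the collision cone boundary, i.e., ⟪p, v⟫ + ‖v‖·√(‖p‖² − r²) = 0 and v ≠ 0. Then the minimum over t ≥ 0 of ‖p + t·v‖² equals exactly r². -/
open scoped InnerProductSpace

section LineDistance

variable {E : Type*} [NormedAddCommGroup E] [InnerProductSpace ℝ E]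

theorem norm_add_smul_sq (p v : E) (t : ℝ) :
    ‖p + t • v‖ ^ 2 = ‖p‖ ^ 2 + 2 * t * ⟪p, v⟫_ℝ + t ^ 2 * ‖v‖ ^ 2 := by
  rw [norm_add_sq_real, inner_smul_right, norm_smul, Real.norm_eq_abs, mul_pow, sq_abs]
  ring

theorem isLeast_norm_add_smul_sq_of_inner_eq {p v : E} {d : ℝ} (hv : v ≠ 0) (hd : 0 ≤ d)
    (hpv : ⟪p, v⟫_ℝ = -(‖v‖ * d)) :
    IsLeast {s : ℝ | ∃ t : ℝ, 0 ≤ t ∧ s = ‖p + t • v‖ ^ 2} (‖p‖ ^ 2 - d ^ 2) := by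
  have hv₀ : 0 < ‖v‖ := norm_pos_iff.mpr hv
  have hsq (t : ℝ) : ‖p + t • v‖ ^ 2 = ‖p‖ ^ 2 - d ^ 2 + (t * ‖v‖ - d) ^ 2 := by
    rw [norm_add_smul_sq, hpv]
    ring
  constructor
  · refine ⟨d / ‖v‖, div_nonneg hd hv₀.le, ?_⟩
    rw [hsq, div_mul_cancel₀ d hv₀.ne', sub_self]
    ring
  · rintro s ⟨t, -, rfl⟩
    rw [hsq]
    exact le_add_of_nonneg_right (sq_nonneg _)

end LineDistance

theorem stmt19 (p v : EuclideanSpace ℝ (Fin 3)) (r : ℝ) (hr : 0 < r)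
    (hpr : ‖p‖ > r) (hv : v ≠ 0)
    (htan : ⟪p, v⟫_ℝ + ‖v‖ * Real.sqrt (‖p‖ ^ 2 - r ^ 2) = 0) :
    IsLeast {s : ℝ | ∃ t : ℝ, 0 ≤ t ∧ s = ‖p + t • v‖ ^ 2} (r ^ 2) := by
  have hdisc : 0 ≤ ‖p‖ ^ 2 - r ^ 2 := by nlinarith
  have hmin := isLeast_norm_add_smul_sq_of_inner_eq hv (Real.sqrt_nonneg _)
    (eq_neg_of_add_eq_zero_left htan)
  rwa [Real.sq_sqrt hdisc, sub_sub_cancel] at hmin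
end
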